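/- For every composition α and every composition τ = (τ_1,…,τ_m), the product 𝔖_α · H_{τ_1} H_{τ_2} ⋯ H_{τ_m} equals Σ_T 𝔖_{(outer shape of T)}, where the sum ranges over all skew immaculate tableaux T of inner shape α and content τ whose entries in row-filling order come from successive horizontal additions; equivalently, 𝔖_α H_τ = Σ 𝔖_γ summed over all chains α = β^(0) ⊂_{τ_1} β^(1) ⊂_{τ_2} ⋯ ⊂_{τ_m} β^(m) = γ. -/

import Mathlib

open scoped BigOperators

noncomputable section

/-- `NSym`: the free associative `ℚ`-algebra on generators `H_1, H_2, …`
(modelled as the free algebra on `ℕ`; only generators with positive index are used). -/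
abbrev NSym : Type := FreeAlgebra ℚ ℕ

/-- The complete homogeneous generator `H_n`, with `H_0 = 1` and `H_m = 0` for `m < 0`. -/
noncomputable def H (n : ℤ) : NSym :=
  if n < 0 then 0 else if n = 0 then 1 else FreeAlgebra.ι ℚ n.toNat

/-- Ordered product `H_{γ_1} H_{γ_2} ⋯ H_{γ_k}` for an integer vector `γ`. -/
noncomputable def Hprod (l : List ℤ) : NSym := (l.map H).prod

/-- A composition: a finite sequence of positive integers. -/
def IsComposition (l : List ℕ) : Prop := ∀ x ∈ l, 0 < x

/-- The immaculate function
`𝔖_α = Σ_{σ ∈ S_k} sgn(σ) H_{α_1+σ(1)-1} ⋯ H_{α_k+σ(k)-k}`. -/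
noncomputable def immaculate (α : List ℕ) : NSym :=
  ∑ σ : Equiv.Perm (Fin α.length),
    ((Equiv.Perm.sign σ : ℤ)) •
      Hprod (List.ofFn fun i => ((α.get i : ℤ) + ((σ i : ℕ) : ℤ) - ((i : ℕ) : ℤ)))

/-- `c` is a (finitely supported) expansion of `f` in the immaculate basis:
the support of `c` consists of compositions and `f = Σ_γ c(γ) 𝔖_γ`. -/
def IsExpansion (f : NSym) (c : List ℕ →₀ ℚ) : Prop :=
  (∀ γ ∈ c.support, IsComposition γ) ∧ f = c.sum fun γ q => q • immaculate γ

/-- `α ⊂_s β` : `|β| = |α| + s`, `α_j ≤ β_j` for all `j`, and `ℓ(β) ≤ ℓ(α) + 1`. -/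
def SubCompS (s : ℕ) (α β : List ℕ) : Prop :=
  β.sum = α.sum + s ∧ (∀ j, α.getD j 0 ≤ β.getD j 0) ∧ β.length ≤ α.length + 1

/-- A skew immaculate tableau of inner shape `α`, recorded by its rows of filled
cells: entries are positive, rows weakly increase, rows strictly below the inner
shape are nonempty, and the first column (heads of the rows below the inner shape)
strictly increases. -/
def IsSkewImmaculate (α : List ℕ) (T : List (List ℕ)) : Prop :=
  α.length ≤ T.length ∧
  (∀ r ∈ T, (∀ x ∈ r, 0 < x) ∧ r.Pairwise (· ≤ ·)) ∧
  (∀ i, α.length ≤ i → i < T.length → T.getD i [] ≠ []) ∧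
  ((T.drop α.length).map (fun r => r.headD 0)).Pairwise (· < ·)

/-- The (full, outer) shape of a skew tableau `T` with inner shape `α`. -/
def shapeOf (α : List ℕ) (T : List (List ℕ)) : List ℕ :=
  List.ofFn fun i : Fin T.length => α.getD i 0 + (T.get i).length

/-- Number of occurrences of the value `v` in the tableau `T`. -/
def countVal (T : List (List ℕ)) (v : ℕ) : ℕ := (T.map fun r => r.count v).sum

/-- `T` has content `β`: the value `v+1` occurs exactly `β_{v+1}` times. -/
def ContentEq (β : List ℕ) (T : List (List ℕ)) : Prop :=
  ∀ v, countVal T (v + 1) = β.getD v 0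

/-- Reading word: each row right to left, from the top row to the bottom row. -/
def readingWord (T : List (List ℕ)) : List ℕ := (T.map List.reverse).flatten

/-- Yamanouchi: each prefix contains at least as many `j`'s as `(j+1)`'s, `j ≥ 1`. -/
def IsYamanouchi (w : List ℕ) : Prop :=
  ∀ j k, 0 < j → (w.take k).count (j + 1) ≤ (w.take k).count j

/-- Entrywise sum `α + v` (padding `v` with zeros). -/
def padAdd (α v : List ℕ) : List ℕ :=
  List.ofFn fun i : Fin α.length => α.get i + v.getD i 0
open scoped Classical

lemma H_zero : H 0 = 1 := by simp [H]

lemma H_neg {n : ℤ} (h : n < 0) : H n = 0 := by simp [H, h]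

lemma H_pos {n : ℤ} (h : 0 < n) : H n = FreeAlgebra.ι ℚ n.toNat := by
  simp [H, h.ne', not_lt.mpr h.le]

lemma Hprod_append (l₁ l₂ : List ℤ) : Hprod (l₁ ++ l₂) = Hprod l₁ * Hprod l₂ := by
  simp [Hprod]

lemma Hprod_singleton (x : ℤ) : Hprod [x] = H x := by simp [Hprod]

lemma Hprod_eq_zero {l : List ℤ} {x : ℤ} (hx : x ∈ l) (h : x < 0) : Hprod l = 0 := by
  apply List.prod_eq_zero
  rw [List.mem_map]
  exact ⟨x, hx, H_neg h⟩

/-- Generalized immaculate function of an integer vector. -/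
noncomputable def imm (n : ℕ) (b : Fin n → ℤ) : NSym :=
  ∑ σ : Equiv.Perm (Fin n),
    ((Equiv.Perm.sign σ : ℤ)) •
      Hprod (List.ofFn fun i => b i + ((σ i : ℕ) : ℤ) - ((i : ℕ) : ℤ))

lemma immaculate_eq_imm (α : List ℕ) :
    immaculate α = imm α.length (fun i => (α.get i : ℤ)) := rfl

/-- Lift a permutation of `Fin n` to `Fin (n+1)` fixing the last element. -/
noncomputable def liftPerm {n : ℕ} (π : Equiv.Perm (Fin n)) : Equiv.Perm (Fin (n + 1)) :=
  (finSuccEquivLast (n := n)).symm.permCongr π.optionCongr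

@[simp] lemma liftPerm_castSucc {n : ℕ} (π : Equiv.Perm (Fin n)) (i : Fin n) :
    liftPerm π (Fin.castSucc i) = Fin.castSucc (π i) := by
  simp [liftPerm, Equiv.permCongr_apply]

@[simp] lemma liftPerm_last {n : ℕ} (π : Equiv.Perm (Fin n)) :
    liftPerm π (Fin.last n) = Fin.last n := by
  simp [liftPerm, Equiv.permCongr_apply]

@[simp] lemma sign_liftPerm {n : ℕ} (π : Equiv.Perm (Fin n)) :
    Equiv.Perm.sign (liftPerm π) = Equiv.Perm.sign π := by
  simp [liftPerm, Equiv.Perm.sign_permCongr]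

lemma perm_eq_one_of_le {n : ℕ} (τ : Equiv.Perm (Fin n)) (h : ∀ j, (τ j : ℕ) ≤ (j : ℕ)) :
    τ = 1 := by
  have hsum : ∑ j : Fin n, ((τ j : ℕ)) = ∑ j : Fin n, (j : ℕ) :=
    Equiv.sum_comp τ (fun j => (j : ℕ))
  have hpt : ∀ j : Fin n, (τ j : ℕ) = (j : ℕ) := by
    intro j
    exact (Finset.sum_eq_sum_iff_of_le (fun i _ => h i)).mp hsum j (Finset.mem_univ j)
  ext j
  exact hpt j

/-- Equivalence splitting a permutation of `Fin (n+1)` by the image of the last element. -/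
noncomputable def permOptEquiv (n : ℕ) :
    Equiv.Perm (Fin (n + 1)) ≃ Option (Fin n) × Equiv.Perm (Fin n) :=
  (Equiv.permCongr finSuccEquivLast).trans Equiv.Perm.decomposeOption

lemma permOptEquiv_symm_none {n : ℕ} (π : Equiv.Perm (Fin n)) :
    (permOptEquiv n).symm (none, π) = liftPerm π := by
  ext x
  simp [permOptEquiv, liftPerm, Equiv.permCongr_apply,
    Equiv.Perm.decomposeOption_symm_apply]

lemma permOptEquiv_symm_some_last {n : ℕ} (j : Fin n) (π : Equiv.Perm (Fin n)) :
    (permOptEquiv n).symm (some j, π) (Fin.last n) = Fin.castSucc j := by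
  simp [permOptEquiv, Equiv.permCongr_apply, Equiv.Perm.decomposeOption_symm_apply]

lemma sum_perm_split {n : ℕ} {M : Type*} [AddCommMonoid M] (f : Equiv.Perm (Fin (n + 1)) → M) :
    ∑ σ, f σ = (∑ π : Equiv.Perm (Fin n), f (liftPerm π)) +
      ∑ j : Fin n, ∑ π : Equiv.Perm (Fin n), f ((permOptEquiv n).symm (some j, π)) := by
  rw [← Equiv.sum_comp (permOptEquiv n).symm f, Fintype.sum_prod_type, Fintype.sum_option]
  simp [permOptEquiv_symm_none]

lemma imm_snoc_zero {n : ℕ} (b : Fin n → ℤ) :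
    imm (n + 1) (Fin.snoc b 0) = imm n b := by
  rw [imm, sum_perm_split]
  have h2 : ∀ j : Fin n, ∀ π : Equiv.Perm (Fin n),
      ((Equiv.Perm.sign ((permOptEquiv n).symm (some j, π)) : ℤ)) •
        Hprod (List.ofFn fun i => (Fin.snoc b 0 : Fin (n+1) → ℤ) i +
          (((((permOptEquiv n).symm (some j, π)) i : ℕ)) : ℤ) - ((i : ℕ) : ℤ)) = 0 := by
    intro j π
    have hmem : ((Fin.snoc b 0 : Fin (n+1) → ℤ) (Fin.last n) +
        (((((permOptEquiv n).symm (some j, π)) (Fin.last n) : ℕ)) : ℤ) - ((Fin.last n : ℕ) : ℤ)) ∈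
        List.ofFn fun i => (Fin.snoc b 0 : Fin (n+1) → ℤ) i +
          (((((permOptEquiv n).symm (some j, π)) i : ℕ)) : ℤ) - ((i : ℕ) : ℤ) :=
      List.mem_ofFn.mpr ⟨Fin.last n, rfl⟩
    rw [Hprod_eq_zero hmem ?_, smul_zero]
    rw [permOptEquiv_symm_some_last]
    simp only [Fin.snoc_last, Fin.coe_castSucc, Fin.val_last]
    have : (j : ℕ) < n := j.isLt
    omega
  rw [Finset.sum_eq_zero fun j _ => Finset.sum_eq_zero fun π _ => h2 j π, add_zero]
  apply Finset.sum_congr rfl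
  intro π _
  rw [sign_liftPerm]
  congr 1
  have : (List.ofFn fun i : Fin (n+1) => (Fin.snoc b 0 : Fin (n+1) → ℤ) i + (((liftPerm π i : ℕ)) : ℤ) - ((i : ℕ) : ℤ))
      = (List.ofFn fun i : Fin n => b i + ((π i : ℕ) : ℤ) - ((i : ℕ) : ℤ)) ++ [0] := by
    rw [List.ofFn_succ']
    simp only [List.concat_eq_append]
    congr 1
    · congr 1
      funext i
      simp [Fin.snoc_castSucc]
    · simp
  rw [this, Hprod_append, Hprod_singleton, H_zero, mul_one]

lemma sum_sign_swap_zero {k : ℕ} (cond : Equiv.Perm (Fin k) → Prop) [DecidablePred cond] (p q : Fin k)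
    (hpq : p ≠ q) (hswap : ∀ σ, cond σ → cond (σ * Equiv.swap p q)) :
    (∑ σ : Equiv.Perm (Fin k), if cond σ then ((Equiv.Perm.sign σ : ℤ)) else 0) = 0 := by
  apply Finset.sum_ninvolution (g := fun σ => σ * Equiv.swap p q)
  · intro σ
    by_cases h : cond σ
    · have h2 : cond (σ * Equiv.swap p q) := hswap σ h
      rw [if_pos h, if_pos h2]
      rw [Equiv.Perm.sign_mul, Equiv.Perm.sign_swap hpq]
      push_cast
      ring
    · have h2 : ¬cond (σ * Equiv.swap p q) := fun hc => by
        have := hswap _ hc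
        rw [mul_assoc, Equiv.swap_mul_self, mul_one] at this
        exact h this
      rw [if_neg h, if_neg h2, add_zero]
  · intro σ _ heq
    exact hpq (Equiv.swap_eq_one_iff.mp (mul_eq_left.mp heq))
  · intro _; exact Finset.mem_univ _
  · intro σ
    rw [mul_assoc, Equiv.swap_mul_self, mul_one]

lemma det_lemma (k : ℕ) (u : Fin (k + 1) → ℤ) (hu : (k : ℤ) ≤ u (Fin.last k)) :
    (∑ σ : Equiv.Perm (Fin (k + 1)),
        if ∀ i, ((σ i : ℕ) : ℤ) ≤ u i then ((Equiv.Perm.sign σ : ℤ)) else 0) =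
      ∑ σ : Equiv.Perm (Fin k),
        if ∀ i : Fin k, ((σ i : ℕ) : ℤ) = u i.castSucc then ((Equiv.Perm.sign σ : ℤ)) else 0 := by
  by_cases hneg : ∃ i : Fin k, u i.castSucc < 0
  · obtain ⟨i, hi⟩ := hneg
    rw [Finset.sum_eq_zero, Finset.sum_eq_zero]
    · intro σ _
      rw [if_neg]
      intro hc
      have := hc i
      omega
    · intro σ _
      rw [if_neg]
      intro hc
      have := hc i.castSucc
      have h0 : (0 : ℤ) ≤ ((σ i.castSucc : ℕ) : ℤ) := Int.natCast_nonneg _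
      omega
  push_neg at hneg
  by_cases hbig : ∃ i : Fin k, (k : ℤ) ≤ u i.castSucc
  · obtain ⟨i, hi⟩ := hbig
    trans (0 : ℤ)
    · apply sum_sign_swap_zero (fun σ => ∀ i, ((σ i : ℕ) : ℤ) ≤ u i) i.castSucc (Fin.last k)
        (Fin.castSucc_lt_last i).ne
      intro σ hσ x
      have hx := hσ x
      by_cases hxp : x = i.castSucc
      · subst hxp
        have : (σ (Fin.last k) : ℕ) ≤ k := Nat.lt_succ_iff.mp (σ (Fin.last k)).isLt
        simp only [Equiv.Perm.mul_apply, Equiv.swap_apply_left]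
        omega
      by_cases hxq : x = Fin.last k
      · subst hxq
        have : (σ i.castSucc : ℕ) ≤ k := Nat.lt_succ_iff.mp (σ i.castSucc).isLt
        simp only [Equiv.Perm.mul_apply, Equiv.swap_apply_right]
        omega
      · simp only [Equiv.Perm.mul_apply, Equiv.swap_apply_of_ne_of_ne hxp hxq]
        exact hσ x
    · symm
      apply Finset.sum_eq_zero
      intro σ _
      rw [if_neg]
      intro hc
      have := hc i
      have h2 : (σ i : ℕ) < k := (σ i).isLt
      omega
  push_neg at hbig
  by_cases hrep : ∃ i j : Fin k, i ≠ j ∧ u i.castSucc = u j.castSucc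
  · obtain ⟨i, j, hij, hu2⟩ := hrep
    trans (0 : ℤ)
    · apply sum_sign_swap_zero (fun σ => ∀ i, ((σ i : ℕ) : ℤ) ≤ u i) i.castSucc j.castSucc
        (fun h => hij (Fin.castSucc_inj.mp h))
      intro σ hσ x
      by_cases hxp : x = i.castSucc
      · subst hxp
        have := hσ j.castSucc
        simp only [Equiv.Perm.mul_apply, Equiv.swap_apply_left]
        omega
      by_cases hxq : x = j.castSucc
      · subst hxq
        have := hσ i.castSucc
        simp only [Equiv.Perm.mul_apply, Equiv.swap_apply_right]
        omega
      · simp only [Equiv.Perm.mul_apply, Equiv.swap_apply_of_ne_of_ne hxp hxq]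
        exact hσ x
    · symm
      apply Finset.sum_eq_zero
      intro σ _
      rw [if_neg]
      intro hc
      have h1 := hc i
      have h2 := hc j
      rw [← hu2] at h2
      have : σ i = σ j := by
        apply Fin.ext
        omega
      exact hij (σ.injective this)
  push_neg at hrep
  -- now u restricted to castSucc is a permutation pattern
  have hlt : ∀ i : Fin k, u i.castSucc < k := fun i => lt_of_not_ge fun h => by
    exact absurd h (by push_neg; exact hbig i)
  have hval : ∀ i : Fin k, (u i.castSucc).toNat < k := by
    intro i
    have := hneg i
    have := hlt i
    omega
  set f : Fin k → Fin k := fun i => ⟨(u i.castSucc).toNat, hval i⟩ with hf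
  have hinj : Function.Injective f := by
    intro i j h
    by_contra hne
    apply absurd (hrep i j hne)
    have := hneg i
    have := hneg j
    simp only [hf, Fin.mk.injEq] at h
    omega
  let π : Equiv.Perm (Fin k) := Equiv.ofBijective f (Finite.injective_iff_bijective.mp hinj)
  have hπ : ∀ i : Fin k, ((π i : ℕ) : ℤ) = u i.castSucc := by
    intro i
    have := hneg i
    show (((f i) : ℕ) : ℤ) = u i.castSucc
    simp only [hf]
    omega
  -- RHS = sign π
  have hRHS : (∑ σ : Equiv.Perm (Fin k),
      if ∀ i : Fin k, ((σ i : ℕ) : ℤ) = u i.castSucc then ((Equiv.Perm.sign σ : ℤ)) else 0)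
      = ((Equiv.Perm.sign π : ℤ)) := by
    have : ∀ σ : Equiv.Perm (Fin k),
        (∀ i : Fin k, ((σ i : ℕ) : ℤ) = u i.castSucc) ↔ σ = π := by
      intro σ
      constructor
      · intro h
        ext i
        have h1 := h i
        have h2 := hπ i
        omega
      · intro h
        subst h
        exact hπ
    calc _ = ∑ σ : Equiv.Perm (Fin k), if σ = π then ((Equiv.Perm.sign σ : ℤ)) else 0 := by
            apply Finset.sum_congr rfl
            intro σ _
            by_cases h : σ = π
            · rw [if_pos ((this σ).mpr h), if_pos h]
            · rw [if_neg (fun hc => h ((this σ).mp hc)), if_neg h]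
      _ = _ := by rw [Finset.sum_ite_eq' Finset.univ π]; simp
  rw [hRHS]
  -- LHS: reindex by right multiplication with liftPerm π
  rw [← Equiv.sum_comp (Equiv.mulRight (liftPerm π))
      (fun σ => if ∀ i, ((σ i : ℕ) : ℤ) ≤ u i then ((Equiv.Perm.sign σ : ℤ)) else 0)]
  have hcond : ∀ τ : Equiv.Perm (Fin (k + 1)),
      (∀ i, (((τ * liftPerm π) i : ℕ) : ℤ) ≤ u i) ↔ τ = 1 := by
    intro τ
    constructor
    · intro h
      apply perm_eq_one_of_le
      intro j
      rcases Fin.eq_castSucc_or_eq_last j with ⟨m, rfl⟩ | rfl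
      · have := h (Fin.castSucc (π.symm m))
        rw [Equiv.Perm.mul_apply, liftPerm_castSucc, Equiv.apply_symm_apply] at this
        have h2 := hπ (π.symm m)
        rw [Equiv.apply_symm_apply] at h2
        rw [← h2] at this
        simp only [Fin.coe_castSucc]
        omega
      · exact Nat.lt_succ_iff.mp (τ (Fin.last k)).isLt
    · intro h
      subst h
      intro i
      rw [one_mul]
      rcases Fin.eq_castSucc_or_eq_last i with ⟨m, rfl⟩ | rfl
      · rw [liftPerm_castSucc]
        rw [← hπ m]
        simp
      · rw [liftPerm_last]
        simpa using hu
  calc (∑ τ : Equiv.Perm (Fin (k + 1)),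
        if ∀ i, ((((Equiv.mulRight (liftPerm π)) τ i : ℕ) : ℤ)) ≤ u i
        then ((Equiv.Perm.sign ((Equiv.mulRight (liftPerm π)) τ) : ℤ)) else 0)
      = ∑ τ : Equiv.Perm (Fin (k + 1)),
        if τ = 1 then ((Equiv.Perm.sign (τ * liftPerm π) : ℤ)) else 0 := by
        apply Finset.sum_congr rfl
        intro τ _
        simp only [Equiv.coe_mulRight]
        by_cases h : τ = 1
        · rw [if_pos h]; exact if_pos ((hcond τ).mpr h)
        · rw [if_neg h]; exact if_neg (fun hc => h ((hcond τ).mp hc))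
    _ = ((Equiv.Perm.sign π : ℤ)) := by
        rw [Finset.sum_ite_eq' Finset.univ (1 : Equiv.Perm (Fin (k + 1)))]
        simp

noncomputable def Wfin (k N : ℕ) : Finset (Fin k → ℕ) :=
  (Fintype.piFinset fun _ : Fin k => Finset.range (N + 1)).filter fun w => ∑ i, w i = N

lemma mem_Wfin {k N : ℕ} {w : Fin k → ℕ} : w ∈ Wfin k N ↔ ∑ i, w i = N := by
  constructor
  · intro h
    exact (Finset.mem_filter.mp h).2
  · intro h
    refine Finset.mem_filter.mpr ⟨Fintype.mem_piFinset.mpr fun i => ?_, h⟩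
    rw [Finset.mem_range, Nat.lt_succ_iff, ← h]
    exact Finset.single_le_sum (fun j _ => Nat.zero_le _) (Finset.mem_univ i)

noncomputable def Vfin (k : ℕ) (a : Fin k → ℕ) (s : ℕ) : Finset (Fin (k + 1) → ℕ) :=
  (Wfin (k + 1) ((∑ i, a i) + s)).filter fun v => ∀ i : Fin k, a i ≤ v i.castSucc

lemma mem_Vfin {k s : ℕ} {a : Fin k → ℕ} {v : Fin (k + 1) → ℕ} :
    v ∈ Vfin k a s ↔ (∑ i, v i = (∑ i, a i) + s ∧ ∀ i : Fin k, a i ≤ v i.castSucc) := by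
  rw [Vfin, Finset.mem_filter, mem_Wfin]

lemma sum_perm_val {n : ℕ} (σ : Equiv.Perm (Fin n)) :
    ∑ i, ((σ i : ℕ) : ℤ) = ∑ i : Fin n, ((i : ℕ) : ℤ) :=
  Equiv.sum_comp σ (fun i => ((i : ℕ) : ℤ))

/-- The column-bound vector for the determinant lemma. -/
noncomputable def ucol (k : ℕ) (a : Fin k → ℕ) (w : Fin (k + 1) → ℕ) (i : Fin (k + 1)) : ℤ :=
  (w i : ℤ) - (Fin.snoc (fun j : Fin k => (a j : ℤ)) 0 : Fin (k + 1) → ℤ) i + ((i : ℕ) : ℤ)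

lemma ucol_castSucc {k : ℕ} (a : Fin k → ℕ) (w : Fin (k + 1) → ℕ) (i : Fin k) :
    ucol k a w i.castSucc = (w i.castSucc : ℤ) - (a i : ℤ) + ((i : ℕ) : ℤ) := by
  simp [ucol]

lemma ucol_last {k : ℕ} (a : Fin k → ℕ) (w : Fin (k + 1) → ℕ) :
    ucol k a w (Fin.last k) = (w (Fin.last k) : ℤ) + (k : ℤ) := by
  simp [ucol]

noncomputable def Pmono {k : ℕ} (w : Fin k → ℕ) : NSym :=
  Hprod (List.ofFn fun i => ((w i : ℕ) : ℤ))

lemma pieri_vec (k s : ℕ) (a : Fin k → ℕ) :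
    imm k (fun i => (a i : ℤ)) * H (s : ℤ) =
      ∑ v ∈ Vfin k a s, imm (k + 1) (fun i => (v i : ℤ)) := by
  classical
  set N := (∑ i, a i) + s with hNdef
  have sum_shift : ∀ (n : ℕ) (σ : Equiv.Perm (Fin n)) (f : Fin n → ℤ),
      ∑ i, (f i + ((σ i : ℕ) : ℤ) - ((i : ℕ) : ℤ)) = ∑ i, f i := by
    intro n σ f
    rw [Finset.sum_sub_distrib, Finset.sum_add_distrib, sum_perm_val]
    ring
  ----------------------------------------------------------------
  -- Step 1: LHS = ∑_{w ∈ W} B(w) • Pmono w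
  ----------------------------------------------------------------
  have hper : ∀ σ : Equiv.Perm (Fin k),
      (∑ w ∈ Wfin (k + 1) N,
        if ∀ i : Fin k, ((σ i : ℕ) : ℤ) = ucol k a w i.castSucc then
          ((Equiv.Perm.sign σ : ℤ)) • Pmono w else 0)
      = ((Equiv.Perm.sign σ : ℤ)) •
          Hprod (List.ofFn
            (Fin.snoc (fun i : Fin k => (a i : ℤ) + ((σ i : ℕ) : ℤ) - ((i : ℕ) : ℤ)) (s : ℤ))) := by
    intro σ
    have hcond : ∀ w : Fin (k + 1) → ℕ, ∀ i : Fin k,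
        (((σ i : ℕ) : ℤ) = ucol k a w i.castSucc) ↔
          ((w i.castSucc : ℤ) = (a i : ℤ) + ((σ i : ℕ) : ℤ) - ((i : ℕ) : ℤ)) := by
      intro w i
      rw [ucol_castSucc]
      constructor <;> (intro h; omega)
    by_cases hg : ∀ i : Fin k, ((i : ℕ) : ℤ) ≤ (a i : ℤ) + ((σ i : ℕ) : ℤ)
    · set w0 : Fin (k + 1) → ℕ :=
        Fin.snoc (fun i : Fin k => ((a i : ℤ) + ((σ i : ℕ) : ℤ) - ((i : ℕ) : ℤ)).toNat) s
        with hw0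
      have hw0c : ∀ i : Fin k, (w0 i.castSucc : ℤ) =
          (a i : ℤ) + ((σ i : ℕ) : ℤ) - ((i : ℕ) : ℤ) := by
        intro i
        rw [hw0]
        simp only [Fin.snoc_castSucc]
        have := hg i
        omega
      have hw0l : w0 (Fin.last k) = s := by rw [hw0]; simp
      have hw0W : w0 ∈ Wfin (k + 1) N := by
        rw [mem_Wfin]
        have h1 : (∑ i, (w0 i : ℤ)) = (N : ℤ) := by
          rw [Fin.sum_univ_castSucc]
          have h2 : ∑ i : Fin k, (w0 i.castSucc : ℤ) = ∑ i, (a i : ℤ) := by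
            rw [Finset.sum_congr rfl fun i _ => hw0c i]
            exact sum_shift k σ _
          rw [h2, hw0l, hNdef]
          push_cast
          ring
        exact_mod_cast h1
      have huniq : ∀ w ∈ Wfin (k + 1) N,
          (∀ i : Fin k, ((σ i : ℕ) : ℤ) = ucol k a w i.castSucc) → w = w0 := by
        intro w hw hc
        have hcast : ∀ i : Fin k, w i.castSucc = w0 i.castSucc := by
          intro i
          have h1 := (hcond w i).mp (hc i)
          have h2 := hw0c i
          omega
        have hlast : w (Fin.last k) = w0 (Fin.last k) := by
          have hsw := mem_Wfin.mp hw
          have hsw0 := mem_Wfin.mp hw0W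
          have e1 : ∑ i, w i = ∑ i : Fin k, w i.castSucc + w (Fin.last k) :=
            Fin.sum_univ_castSucc _
          have e2 : ∑ i, w0 i = ∑ i : Fin k, w0 i.castSucc + w0 (Fin.last k) :=
            Fin.sum_univ_castSucc _
          have e3 : ∑ i : Fin k, w i.castSucc = ∑ i : Fin k, w0 i.castSucc :=
            Finset.sum_congr rfl fun i _ => hcast i
          omega
        funext i
        rcases Fin.eq_castSucc_or_eq_last i with ⟨m, rfl⟩ | rfl
        · exact hcast m
        · exact hlast
      rw [Finset.sum_eq_single w0]
      · rw [if_pos]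
        · have hlist : (List.ofFn fun i => ((w0 i : ℕ) : ℤ)) = List.ofFn
              (Fin.snoc (fun i : Fin k => (a i : ℤ) + ((σ i : ℕ) : ℤ) - ((i : ℕ) : ℤ)) (s : ℤ)) := by
            congr 1
            funext i
            rcases Fin.eq_castSucc_or_eq_last i with ⟨m, rfl⟩ | rfl
            · rw [Fin.snoc_castSucc, ← hw0c m]
            · rw [Fin.snoc_last, hw0l]
          show ((Equiv.Perm.sign σ : ℤ)) • Hprod (List.ofFn fun i => ((w0 i : ℕ) : ℤ)) = _
          rw [hlist]
        · intro i
          rw [hcond w0 i, hw0c i]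
      · intro w hw hne
        rw [if_neg]
        intro hc
        exact hne (huniq w hw hc)
      · intro h
        exact absurd hw0W h
    · push_neg at hg
      obtain ⟨i0, hi0⟩ := hg
      rw [Finset.sum_eq_zero, eq_comm, smul_eq_zero]
      · right
        apply Hprod_eq_zero (x := (a i0 : ℤ) + ((σ i0 : ℕ) : ℤ) - ((i0 : ℕ) : ℤ))
        · rw [List.mem_ofFn]
          exact ⟨i0.castSucc, by rw [Fin.snoc_castSucc]⟩
        · omega
      · intro w hw
        rw [if_neg]
        intro hc
        have h1 := (hcond w i0).mp (hc i0)
        have h2 : (0 : ℤ) ≤ (w i0.castSucc : ℤ) := Int.natCast_nonneg _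
        omega
  have hLHS : imm k (fun i => (a i : ℤ)) * H (s : ℤ) =
      ∑ w ∈ Wfin (k + 1) N,
        (∑ σ : Equiv.Perm (Fin k),
          if ∀ i : Fin k, ((σ i : ℕ) : ℤ) = ucol k a w i.castSucc then
            ((Equiv.Perm.sign σ : ℤ)) else 0) • Pmono w := by
    rw [imm, Finset.sum_mul]
    simp only [smul_mul_assoc]
    have hterm : ∀ σ : Equiv.Perm (Fin k),
        Hprod (List.ofFn fun i : Fin k =>
            (a i : ℤ) + ((σ i : ℕ) : ℤ) - ((i : ℕ) : ℤ)) * H (s : ℤ) =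
          Hprod (List.ofFn
            (Fin.snoc (fun i : Fin k => (a i : ℤ) + ((σ i : ℕ) : ℤ) - ((i : ℕ) : ℤ)) (s : ℤ))) := by
      intro σ
      rw [List.ofFn_succ' (Fin.snoc _ _), List.concat_eq_append, Hprod_append, Hprod_singleton]
      simp only [Fin.snoc_castSucc, Fin.snoc_last]
    calc ∑ σ : Equiv.Perm (Fin k), ((Equiv.Perm.sign σ : ℤ)) •
            (Hprod (List.ofFn fun i : Fin k =>
              (a i : ℤ) + ((σ i : ℕ) : ℤ) - ((i : ℕ) : ℤ)) * H (s : ℤ))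
        = ∑ σ : Equiv.Perm (Fin k), ((Equiv.Perm.sign σ : ℤ)) •
            Hprod (List.ofFn
              (Fin.snoc (fun i : Fin k => (a i : ℤ) + ((σ i : ℕ) : ℤ) - ((i : ℕ) : ℤ)) (s : ℤ))) := by
          exact Finset.sum_congr rfl fun σ _ => by rw [hterm σ]
      _ = ∑ σ : Equiv.Perm (Fin k), ∑ w ∈ Wfin (k + 1) N,
            if ∀ i : Fin k, ((σ i : ℕ) : ℤ) = ucol k a w i.castSucc then
              ((Equiv.Perm.sign σ : ℤ)) • Pmono w else 0 := by
          exact Finset.sum_congr rfl fun σ _ => (hper σ).symm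
      _ = ∑ w ∈ Wfin (k + 1) N, ∑ σ : Equiv.Perm (Fin k),
            if ∀ i : Fin k, ((σ i : ℕ) : ℤ) = ucol k a w i.castSucc then
              ((Equiv.Perm.sign σ : ℤ)) • Pmono w else 0 := Finset.sum_comm
      _ = _ := by
          apply Finset.sum_congr rfl
          intro w _
          rw [Finset.sum_smul]
          apply Finset.sum_congr rfl
          intro σ _
          rw [ite_smul, zero_smul]
  ----------------------------------------------------------------
  -- Step 2: RHS = ∑_{w ∈ W} D(w) • Pmono w
  ----------------------------------------------------------------
  have hstep : ∀ σ' : Equiv.Perm (Fin (k + 1)),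
      (∑ v ∈ Vfin k a s,
        Hprod (List.ofFn fun i => ((v i : ℕ) : ℤ) + ((σ' i : ℕ) : ℤ) - ((i : ℕ) : ℤ)))
      = ∑ w ∈ Wfin (k + 1) N,
          if ∀ i, ((σ' i : ℕ) : ℤ) ≤ ucol k a w i then Pmono w else 0 := by
    intro σ'
    rw [← Finset.sum_filter]
    rw [← Finset.sum_filter_add_sum_filter_not (Vfin k a s)
      (fun v => ∀ i : Fin (k + 1), ((i : ℕ) : ℤ) ≤ (v i : ℤ) + ((σ' i : ℕ) : ℤ))]
    have hz : ∑ v ∈ (Vfin k a s).filter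
        (fun v => ¬ ∀ i : Fin (k + 1), ((i : ℕ) : ℤ) ≤ (v i : ℤ) + ((σ' i : ℕ) : ℤ)),
        Hprod (List.ofFn fun i => ((v i : ℕ) : ℤ) + ((σ' i : ℕ) : ℤ) - ((i : ℕ) : ℤ)) = 0 := by
      apply Finset.sum_eq_zero
      intro v hv
      obtain ⟨hv1, hv2⟩ := Finset.mem_filter.mp hv
      push_neg at hv2
      obtain ⟨i0, hi0⟩ := hv2
      apply Hprod_eq_zero (x := ((v i0 : ℕ) : ℤ) + ((σ' i0 : ℕ) : ℤ) - ((i0 : ℕ) : ℤ))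
      · rw [List.mem_ofFn]
        exact ⟨i0, rfl⟩
      · omega
    rw [hz, add_zero]
    apply Finset.sum_bij'
      (i := fun v _ => fun i : Fin (k + 1) =>
        (((v i : ℕ) : ℤ) + ((σ' i : ℕ) : ℤ) - ((i : ℕ) : ℤ)).toNat)
      (j := fun w _ => fun i : Fin (k + 1) =>
        (((w i : ℕ) : ℤ) - ((σ' i : ℕ) : ℤ) + ((i : ℕ) : ℤ)).toNat)
    · -- maps into target
      intro v hv
      obtain ⟨hv1, hv2⟩ := Finset.mem_filter.mp hv
      obtain ⟨hsum, hge⟩ := mem_Vfin.mp hv1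
      have hnn : ∀ i : Fin (k + 1), (0 : ℤ) ≤ (v i : ℤ) + ((σ' i : ℕ) : ℤ) - ((i : ℕ) : ℤ) := by
        intro i; have := hv2 i; omega
      have hval : ∀ i : Fin (k + 1),
          (((((v i : ℕ) : ℤ) + ((σ' i : ℕ) : ℤ) - ((i : ℕ) : ℤ)).toNat : ℕ) : ℤ)
            = (v i : ℤ) + ((σ' i : ℕ) : ℤ) - ((i : ℕ) : ℤ) := fun i => Int.toNat_of_nonneg (hnn i)
      refine Finset.mem_filter.mpr ⟨mem_Wfin.mpr ?_, ?_⟩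
      · have hz2 : (∑ i, ((((v i : ℕ) : ℤ) + ((σ' i : ℕ) : ℤ) - ((i : ℕ) : ℤ)).toNat : ℤ))
            = (N : ℤ) := by
          rw [Finset.sum_congr rfl (fun i _ => hval i)]
          rw [sum_shift (k + 1) σ' (fun i => (v i : ℤ))]
          rw [← Nat.cast_sum, hsum]
        exact_mod_cast hz2
      · intro i
        rcases Fin.eq_castSucc_or_eq_last i with ⟨m, rfl⟩ | rfl
        · have h3 : (a m : ℕ) ≤ v m.castSucc := hge m
          have h4 := hval m.castSucc
          rw [ucol_castSucc]
          simp only [Fin.coe_castSucc] at h4 ⊢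
          omega
        · have h4 := hval (Fin.last k)
          rw [ucol_last]
          simp only [Fin.val_last] at h4 ⊢
          omega
    · -- inverse maps into source
      intro w hw
      obtain ⟨hw1, hw2⟩ := Finset.mem_filter.mp hw
      have hsum := mem_Wfin.mp hw1
      have hnn : ∀ i : Fin (k + 1), (0 : ℤ) ≤ (w i : ℤ) - ((σ' i : ℕ) : ℤ) + ((i : ℕ) : ℤ) := by
        intro i
        have h2 := hw2 i
        rcases Fin.eq_castSucc_or_eq_last i with ⟨m, rfl⟩ | rfl
        · rw [ucol_castSucc] at h2
          have : (0 : ℤ) ≤ (a m : ℤ) := Int.natCast_nonneg _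
          simp only [Fin.coe_castSucc] at h2 ⊢
          omega
        · rw [ucol_last] at h2
          simp only [Fin.val_last] at h2 ⊢
          omega
      have hval : ∀ i : Fin (k + 1),
          ((((w i : ℤ) - ((σ' i : ℕ) : ℤ) + ((i : ℕ) : ℤ)).toNat : ℕ) : ℤ)
            = (w i : ℤ) - ((σ' i : ℕ) : ℤ) + ((i : ℕ) : ℤ) := fun i => Int.toNat_of_nonneg (hnn i)
      refine Finset.mem_filter.mpr ⟨mem_Vfin.mpr ⟨?_, ?_⟩, ?_⟩
      · have hz2 : (∑ i, (((w i : ℤ) - ((σ' i : ℕ) : ℤ) + ((i : ℕ) : ℤ)).toNat : ℤ))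
            = (N : ℤ) := by
          rw [Finset.sum_congr rfl (fun i _ => hval i)]
          have h5 : ∑ i, ((w i : ℤ) - ((σ' i : ℕ) : ℤ) + ((i : ℕ) : ℤ))
              = ∑ i, (w i : ℤ) := by
            rw [Finset.sum_add_distrib, Finset.sum_sub_distrib, sum_perm_val]
            ring
          rw [h5, ← Nat.cast_sum, hsum]
        have hz3 : ((∑ i, ((((w i : ℤ) - ((σ' i : ℕ) : ℤ) + ((i : ℕ) : ℤ)).toNat : ℕ)) : ℕ) : ℤ)
            = (N : ℤ) := by push_cast; push_cast at hz2; exact hz2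
        rw [hNdef] at hz3
        exact_mod_cast hz3
      · intro m
        have h2 := hw2 m.castSucc
        rw [ucol_castSucc] at h2
        have h4 := hval m.castSucc
        have h6 : ((a m : ℕ) : ℤ) ≤
            (((((w m.castSucc : ℤ) - ((σ' m.castSucc : ℕ) : ℤ) + ((m.castSucc : ℕ) : ℤ)).toNat : ℕ)) : ℤ) := by
          rw [h4]
          simp only [Fin.coe_castSucc] at h2 ⊢
          omega
        exact_mod_cast h6
      · intro i
        show ((i : ℕ) : ℤ) ≤
          ((((w i : ℤ) - ((σ' i : ℕ) : ℤ) + ((i : ℕ) : ℤ)).toNat : ℕ) : ℤ) + ((σ' i : ℕ) : ℤ)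
        have h4 := hval i
        omega
    · -- left inverse
      intro v hv
      obtain ⟨hv1, hv2⟩ := Finset.mem_filter.mp hv
      funext i
      have h1 := hv2 i
      have h2 : (((((v i : ℕ) : ℤ) + ((σ' i : ℕ) : ℤ) - ((i : ℕ) : ℤ)).toNat : ℕ) : ℤ)
          = (v i : ℤ) + ((σ' i : ℕ) : ℤ) - ((i : ℕ) : ℤ) := Int.toNat_of_nonneg (by omega)
      show ((((((v i : ℕ) : ℤ) + ((σ' i : ℕ) : ℤ) - ((i : ℕ) : ℤ)).toNat : ℕ) : ℤ)
          - ((σ' i : ℕ) : ℤ) + ((i : ℕ) : ℤ)).toNat = v i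
      rw [h2]
      omega
    · -- right inverse
      intro w hw
      obtain ⟨hw1, hw2⟩ := Finset.mem_filter.mp hw
      funext i
      have h2 := hw2 i
      have hnn : (0 : ℤ) ≤ (w i : ℤ) - ((σ' i : ℕ) : ℤ) + ((i : ℕ) : ℤ) := by
        rcases Fin.eq_castSucc_or_eq_last i with ⟨m, rfl⟩ | rfl
        · rw [ucol_castSucc] at h2
          have : (0 : ℤ) ≤ (a m : ℤ) := Int.natCast_nonneg _
          simp only [Fin.coe_castSucc] at h2 ⊢
          omega
        · rw [ucol_last] at h2
          simp only [Fin.val_last] at h2 ⊢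
          omega
      have h3 : ((((w i : ℤ) - ((σ' i : ℕ) : ℤ) + ((i : ℕ) : ℤ)).toNat : ℕ) : ℤ)
          = (w i : ℤ) - ((σ' i : ℕ) : ℤ) + ((i : ℕ) : ℤ) := Int.toNat_of_nonneg hnn
      show (((((w i : ℤ) - ((σ' i : ℕ) : ℤ) + ((i : ℕ) : ℤ)).toNat : ℕ) : ℤ)
          + ((σ' i : ℕ) : ℤ) - ((i : ℕ) : ℤ)).toNat = w i
      rw [h3]
      omega
    · -- values agree
      intro v hv
      obtain ⟨hv1, hv2⟩ := Finset.mem_filter.mp hv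
      show _ = Pmono _
      rw [Pmono]
      congr 1
      congr 1
      funext i
      have := hv2 i
      rw [Int.toNat_of_nonneg (by omega)]
  have hRHS : (∑ v ∈ Vfin k a s, imm (k + 1) (fun i => (v i : ℤ)))
      = ∑ w ∈ Wfin (k + 1) N,
          (∑ σ' : Equiv.Perm (Fin (k + 1)),
            if ∀ i, ((σ' i : ℕ) : ℤ) ≤ ucol k a w i then
              ((Equiv.Perm.sign σ' : ℤ)) else 0) • Pmono w := by
    calc (∑ v ∈ Vfin k a s, imm (k + 1) (fun i => (v i : ℤ)))
        = ∑ σ' : Equiv.Perm (Fin (k + 1)), ((Equiv.Perm.sign σ' : ℤ)) •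
            ∑ v ∈ Vfin k a s,
              Hprod (List.ofFn fun i => ((v i : ℕ) : ℤ) + ((σ' i : ℕ) : ℤ) - ((i : ℕ) : ℤ)) := by
          simp only [imm]
          rw [Finset.sum_comm]
          apply Finset.sum_congr rfl
          intro σ' _
          rw [Finset.smul_sum]
      _ = ∑ σ' : Equiv.Perm (Fin (k + 1)), ∑ w ∈ Wfin (k + 1) N,
            (if ∀ i, ((σ' i : ℕ) : ℤ) ≤ ucol k a w i then
              ((Equiv.Perm.sign σ' : ℤ)) • Pmono w else 0) := by
          apply Finset.sum_congr rfl
          intro σ' _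
          rw [hstep σ', Finset.smul_sum]
          apply Finset.sum_congr rfl
          intro w _
          rw [smul_ite, smul_zero]
      _ = ∑ w ∈ Wfin (k + 1) N, ∑ σ' : Equiv.Perm (Fin (k + 1)),
            (if ∀ i, ((σ' i : ℕ) : ℤ) ≤ ucol k a w i then
              ((Equiv.Perm.sign σ' : ℤ)) • Pmono w else 0) := Finset.sum_comm
      _ = _ := by
          apply Finset.sum_congr rfl
          intro w _
          rw [Finset.sum_smul]
          apply Finset.sum_congr rfl
          intro σ' _
          rw [ite_smul, zero_smul]
  ----------------------------------------------------------------
  -- Step 3: pointwise determinant identity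
  ----------------------------------------------------------------
  rw [hLHS, hRHS]
  apply Finset.sum_congr rfl
  intro w _
  congr 1
  rw [← det_lemma k (ucol k a w)]
  rw [ucol_last]
  have : (0 : ℤ) ≤ (w (Fin.last k) : ℤ) := Int.natCast_nonneg _
  omega

lemma imm_congr {n m : ℕ} (h : n = m) (b : Fin n → ℤ) (c : Fin m → ℤ)
    (hbc : ∀ i : Fin n, b i = c (Fin.cast h i)) : imm n b = imm m c := by
  subst h
  have : b = c := funext fun i => hbc i
  rw [this]

lemma immaculate_ofFn {n : ℕ} (v : Fin n → ℕ) :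
    immaculate (List.ofFn v) = imm n (fun i => (v i : ℤ)) := by
  rw [immaculate_eq_imm]
  apply imm_congr (List.length_ofFn (f := v))
  intro i
  congr 1
  rw [List.get_ofFn]

lemma sum_getD (l : List ℕ) (n : ℕ) (h : l.length ≤ n) :
    ∑ i : Fin n, l.getD i 0 = l.sum := by
  rw [Fin.sum_univ_eq_sum_range (fun i => l.getD i 0) n]
  rw [← Finset.sum_subset (Finset.range_subset_range.mpr h)
    (fun i _ hi => List.getD_eq_default _ _ (le_of_not_gt fun hc =>
      hi (Finset.mem_range.mpr hc)))]
  conv_rhs => rw [← List.ofFn_get l, List.sum_ofFn]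
  rw [← Fin.sum_univ_eq_sum_range (fun i => l.getD i 0) l.length]
  apply Finset.sum_congr rfl
  intro i _
  exact List.getD_eq_get _ _ ⟨_, i.isLt⟩

/-- The map sending a padded vector to the corresponding composition. -/
noncomputable def stripV {k : ℕ} (v : Fin (k + 1) → ℕ) : List ℕ :=
  if v (Fin.last k) = 0 then List.ofFn (fun i : Fin k => v i.castSucc) else List.ofFn v

noncomputable def pieriFinset (α : List ℕ) (s : ℕ) : Finset (List ℕ) :=
  (Vfin α.length (fun i => α.get i) s).image stripV

lemma immaculate_stripV {k : ℕ} (v : Fin (k + 1) → ℕ) :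
    immaculate (stripV v) = imm (k + 1) (fun i => (v i : ℤ)) := by
  rw [stripV]
  by_cases h : v (Fin.last k) = 0
  · rw [if_pos h, immaculate_ofFn]
    have hv : (fun i : Fin (k + 1) => (v i : ℤ)) =
        Fin.snoc (fun i : Fin k => (v i.castSucc : ℤ)) 0 := by
      funext i
      rcases Fin.eq_castSucc_or_eq_last i with ⟨m, rfl⟩ | rfl
      · rw [Fin.snoc_castSucc]
      · rw [Fin.snoc_last, h]
        norm_num
    rw [hv, imm_snoc_zero]
  · rw [if_neg h, immaculate_ofFn]

lemma pieri_list (α : List ℕ) (s : ℕ) :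
    immaculate α * H (s : ℤ) = ∑ β ∈ pieriFinset α s, immaculate β := by
  rw [pieriFinset, Finset.sum_image, immaculate_eq_imm, pieri_vec]
  · apply Finset.sum_congr rfl
    intro v _
    rw [immaculate_stripV]
  · -- injectivity on Vfin
    intro v _ v' _ heq
    rw [stripV, stripV] at heq
    by_cases h : v (Fin.last _) = 0 <;> by_cases h' : v' (Fin.last _) = 0
    · rw [if_pos h, if_pos h'] at heq
      have := List.ofFn_injective heq
      funext i
      rcases Fin.eq_castSucc_or_eq_last i with ⟨m, rfl⟩ | rfl
      · exact congrFun this m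
      · rw [h, h']
    · rw [if_pos h, if_neg h'] at heq
      have := congrArg List.length heq
      simp at this
    · rw [if_neg h, if_pos h'] at heq
      have := congrArg List.length heq
      simp at this
    · rw [if_neg h, if_neg h'] at heq
      exact List.ofFn_injective heq

lemma getD_ofFn_lt {n : ℕ} (f : Fin n → ℕ) (j : ℕ) (h : j < n) :
    (List.ofFn f).getD j 0 = f ⟨j, h⟩ := by
  rw [List.getD_eq_get _ _ ⟨j, by simpa using h⟩]
  rw [List.get_ofFn]
  congr 1

lemma getD_ofFn_ge {n : ℕ} (f : Fin n → ℕ) (j : ℕ) (h : n ≤ j) :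
    (List.ofFn f).getD j 0 = 0 :=
  List.getD_eq_default _ _ (by simpa using h)

lemma list_sum_eq (l : List ℕ) : l.sum = ∑ i, l.get i := by
  conv_lhs => rw [← List.ofFn_get l]
  rw [List.sum_ofFn]

lemma mem_pieriFinset {α : List ℕ} (hα : IsComposition α) {s : ℕ} {β : List ℕ} :
    β ∈ pieriFinset α s ↔ (IsComposition β ∧ SubCompS s α β) := by
  set k := α.length with hk
  have hsumα : ∑ i : Fin k, α.get i = α.sum := (list_sum_eq α).symm
  have hαpos : ∀ i : Fin k, 0 < α.get i := fun i => hα _ (α.get_mem i)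
  constructor
  · rintro hβ
    obtain ⟨v, hv, rfl⟩ := Finset.mem_image.mp hβ
    obtain ⟨hsum, hge⟩ := mem_Vfin.mp hv
    rw [hsumα] at hsum
    rw [stripV]
    by_cases h : v (Fin.last k) = 0
    · rw [if_pos h]
      refine ⟨?_, ?_, ?_, ?_⟩
      · intro x hx
        obtain ⟨i, rfl⟩ := List.mem_ofFn.mp hx
        exact lt_of_lt_of_le (hαpos i) (hge i)
      · rw [List.sum_ofFn, ← hsum, Fin.sum_univ_castSucc, h, add_zero]
      · intro j
        by_cases hj : j < k
        · rw [getD_ofFn_lt _ j hj, List.getD_eq_get _ _ ⟨j, hj⟩]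
          exact hge ⟨j, hj⟩
        · rw [List.getD_eq_default _ _ (le_of_not_gt hj)]
          exact Nat.zero_le _
      · rw [List.length_ofFn]
        exact Nat.le_succ _
    · rw [if_neg h]
      refine ⟨?_, ?_, ?_, ?_⟩
      · intro x hx
        obtain ⟨i, rfl⟩ := List.mem_ofFn.mp hx
        rcases Fin.eq_castSucc_or_eq_last i with ⟨m, rfl⟩ | rfl
        · exact lt_of_lt_of_le (hαpos m) (hge m)
        · exact Nat.pos_of_ne_zero h
      · rw [List.sum_ofFn, hsum]
      · intro j
        by_cases hj : j < k
        · rw [getD_ofFn_lt _ j (lt_trans hj (Nat.lt_succ_self k)), List.getD_eq_get _ _ ⟨j, hj⟩]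
          have := hge ⟨j, hj⟩
          convert this using 2 <;> simp
        · rw [List.getD_eq_default _ _ (le_of_not_gt hj)]
          exact Nat.zero_le _
      · rw [List.length_ofFn]
  · rintro ⟨hβc, hβsum, hβge, hβlen⟩
    have hlb : k ≤ β.length := by
      by_contra hc
      push_neg at hc
      have h1 := hβge β.length
      rw [List.getD_eq_default _ _ (le_refl _)] at h1
      rw [List.getD_eq_get _ _ ⟨β.length, hc⟩] at h1
      exact absurd h1 (Nat.not_le.mpr (hαpos ⟨β.length, hc⟩))
    refine Finset.mem_image.mpr ⟨fun i : Fin (k + 1) => β.getD i 0, ?_, ?_⟩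
    · refine mem_Vfin.mpr ⟨?_, ?_⟩
      · rw [sum_getD β (k + 1) hβlen, hβsum, hsumα]
      · intro i
        have := hβge i
        rw [List.getD_eq_get _ _ ⟨_, i.isLt⟩] at this
        convert this using 2 <;> simp
    · rw [stripV]
      rcases Nat.lt_or_ge k β.length with hl | hl
      · have hlen : β.length = k + 1 := le_antisymm hβlen hl
        have hlast : β.getD ((Fin.last k : Fin (k + 1)) : ℕ) 0 ≠ 0 := by
          rw [Fin.val_last, List.getD_eq_get _ _ ⟨k, by omega⟩]
          exact (hβc _ (β.get_mem ⟨k, by omega⟩)).ne'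
        rw [if_neg hlast]
        apply List.ext_get (by simp [hlen])
        intro n h1 h2
        rw [List.get_ofFn]
        rw [← List.getD_eq_get _ _ ⟨n, h2⟩]
        congr 1
      · have hlen : β.length = k := le_antisymm hl hlb
        have hlast : β.getD ((Fin.last k : Fin (k + 1)) : ℕ) 0 = 0 := by
          rw [Fin.val_last, List.getD_eq_default _ _ (by omega)]
        rw [if_pos hlast]
        apply List.ext_get (by simp [hlen, hk])
        intro n h1 h2
        rw [List.get_ofFn]
        rw [← List.getD_eq_get _ _ ⟨n, h2⟩]
        congr 1

lemma getLastD_congr {l : List (List ℕ)} (h : l ≠ []) (d d' : List ℕ) :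
    l.getLastD d = l.getLastD d' := by
  cases l with
  | nil => exact absurd rfl h
  | cons b t => rw [List.getLastD_cons, List.getLastD_cons]

noncomputable def chainF : List ℕ → List ℕ → Finset (List (List ℕ))
  | α, [] => {[α]}
  | α, t :: τ' => (pieriFinset α t).biUnion fun β =>
      Finset.image (fun ch => α :: ch) (chainF β τ')

lemma chainF_ne_nil {τ : List ℕ} {α : List ℕ} {ch : List (List ℕ)}
    (h : ch ∈ chainF α τ) : ch ≠ [] := by
  cases τ with
  | nil =>
    rw [chainF, Finset.mem_singleton] at h
    subst h; simp
  | cons t τ' =>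
    rw [chainF, Finset.mem_biUnion] at h
    obtain ⟨β, _, hch⟩ := h
    obtain ⟨ch', _, rfl⟩ := Finset.mem_image.mp hch
    simp

lemma chainF_head {τ : List ℕ} {α : List ℕ} {ch : List (List ℕ)}
    (h : ch ∈ chainF α τ) : ch.getD 0 [] = α := by
  cases τ with
  | nil =>
    rw [chainF, Finset.mem_singleton] at h
    subst h; rfl
  | cons t τ' =>
    rw [chainF, Finset.mem_biUnion] at h
    obtain ⟨β, _, hch⟩ := h
    obtain ⟨ch', _, rfl⟩ := Finset.mem_image.mp hch
    rfl

lemma pieri_chain (τ : List ℕ) : ∀ α : List ℕ, IsComposition α →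
    immaculate α * Hprod (τ.map fun x => (x : ℤ)) =
      ∑ ch ∈ chainF α τ, immaculate (ch.getLastD []) := by
  induction τ with
  | nil =>
    intro α hα
    rw [chainF]
    simp [Hprod]
  | cons t τ' ih =>
    intro α hα
    have h1 : Hprod ((t :: τ').map fun x => (x : ℤ)) =
        H (t : ℤ) * Hprod (τ'.map fun x => (x : ℤ)) := by
      simp [Hprod]
    rw [h1, ← mul_assoc, pieri_list α t, Finset.sum_mul, chainF]
    rw [Finset.sum_biUnion]
    · apply Finset.sum_congr rfl
      intro β hβ
      have hβc : IsComposition β := ((mem_pieriFinset hα).mp hβ).1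
      rw [ih β hβc, Finset.sum_image (by intro x _ y _ h; injection h)]
      apply Finset.sum_congr rfl
      intro ch hch
      rw [List.getLastD_cons]
      exact congrArg immaculate (getLastD_congr (chainF_ne_nil hch) _ _)
    · intro β1 h1 β2 h2 hne
      simp only [Function.onFun]
      rw [Finset.disjoint_left]
      intro ch hch1 hch2
      obtain ⟨c1, hc1, rfl⟩ := Finset.mem_image.mp hch1
      obtain ⟨c2, hc2, heq⟩ := Finset.mem_image.mp hch2
      have hc12 : c2 = c1 := by injection heq
      subst hc12
      exact hne ((chainF_head hc1) ▸ (chainF_head hc2))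

lemma mem_chainF (τ : List ℕ) : ∀ (α : List ℕ), IsComposition α → ∀ ch : List (List ℕ),
    (ch ∈ chainF α τ ↔ (ch.length = τ.length + 1 ∧ ch.getD 0 [] = α ∧
      (∀ γ ∈ ch, IsComposition γ) ∧
      ∀ i < τ.length, SubCompS (τ.getD i 0) (ch.getD i []) (ch.getD (i + 1) []))) := by
  induction τ with
  | nil =>
    intro α hα ch
    rw [chainF, Finset.mem_singleton]
    constructor
    · rintro rfl
      refine ⟨rfl, rfl, ?_, fun i hi => absurd hi (by simp)⟩
      intro γ hγ
      rw [List.mem_singleton] at hγ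
      subst hγ; exact hα
    · rintro ⟨hlen, hhead, _, _⟩
      match ch, hlen with
      | [γ], _ =>
        rw [show ([γ] : List (List ℕ)).getD 0 [] = γ from rfl] at hhead
        rw [hhead]
  | cons t τ' ih =>
    intro α hα ch
    constructor
    · intro h
      rw [chainF, Finset.mem_biUnion] at h
      obtain ⟨β, hβ, hch⟩ := h
      obtain ⟨hβc, hβsub⟩ := (mem_pieriFinset hα).mp hβ
      obtain ⟨ch', hch', rfl⟩ := Finset.mem_image.mp hch
      obtain ⟨hlen, hhead, hcomp, hsub⟩ := (ih β hβc ch').mp hch'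
      refine ⟨by simp [hlen], rfl, ?_, ?_⟩
      · intro γ hγ
        rcases List.mem_cons.mp hγ with rfl | hγ
        · exact hα
        · exact hcomp γ hγ
      · intro i hi
        cases i with
        | zero =>
          rw [List.getD_cons_zero, List.getD_cons_succ, hhead]
          exact hβsub
        | succ j =>
          rw [List.getD_cons_succ, List.getD_cons_succ]
          exact hsub j (by simpa using hi)
    · rintro ⟨hlen, hhead, hcomp, hsub⟩
      cases ch with
      | nil => simp at hlen
      | cons γ ch' =>
      obtain rfl : γ = α := by simpa using hhead
      have hch'len : ch'.length = τ'.length + 1 := by simpa using hlen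
      have hch'ne : ch' ≠ [] := by
        intro hc; rw [hc] at hch'len; simp at hch'len
      have hβmem : ch'.getD 0 [] ∈ ch' := by
        rw [List.getD_eq_getElem _ _ (by rw [hch'len]; omega)]
        exact List.getElem_mem _
      have hβc : IsComposition (ch'.getD 0 []) := hcomp _ (List.mem_cons_of_mem _ hβmem)
      have h0 : SubCompS t γ (ch'.getD 0 []) := by
        have := hsub 0 (by simp)
        rwa [List.getD_cons_zero, List.getD_cons_succ] at this
      have hch' : ch' ∈ chainF (ch'.getD 0 []) τ' := by
        rw [ih _ hβc ch']
        refine ⟨hch'len, rfl, fun γ hγ => hcomp γ (List.mem_cons_of_mem _ hγ), ?_⟩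
        intro i hi
        have := hsub (i + 1) (by simpa using hi)
        rwa [List.getD_cons_succ, List.getD_cons_succ] at this
      rw [chainF, Finset.mem_biUnion]
      exact ⟨ch'.getD 0 [], (mem_pieriFinset hα).mpr ⟨hβc, h0⟩,
        Finset.mem_image.mpr ⟨ch', hch', rfl⟩⟩

theorem iterated_pieri' (α : List ℕ) (hα : IsComposition α)
    (τ : List ℕ) (hτ : ∀ t ∈ τ, 0 < t) :
    immaculate α * Hprod (τ.map fun x => (x : ℤ)) =
      ∑ᶠ (ch : List (List ℕ))
        (_ : ch.length = τ.length + 1 ∧ ch.getD 0 [] = α ∧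
          (∀ γ ∈ ch, IsComposition γ) ∧
          ∀ i < τ.length, SubCompS (τ.getD i 0) (ch.getD i []) (ch.getD (i + 1) [])),
        immaculate (ch.getLastD []) := by
  rw [pieri_chain τ α hα, ← finsum_mem_coe_finset]
  apply finsum_congr
  intro ch
  exact finsum_congr_Prop
    (propext (Iff.trans Finset.mem_coe (mem_chainF τ α hα ch))) (fun _ => rfl)

/-- iterated Pieri rule: `𝔖_α H_{τ_1}⋯H_{τ_m} = Σ 𝔖_γ`, summed over
all chains `α = β⁽⁰⁾ ⊂_{τ_1} β⁽¹⁾ ⊂_{τ_2} ⋯ ⊂_{τ_m} β⁽ᵐ⁾ = γ`. -/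
theorem iterated_pieri (α : List ℕ) (hα : IsComposition α)
    (τ : List ℕ) (hτ : ∀ t ∈ τ, 0 < t) :
    immaculate α * Hprod (τ.map fun x => (x : ℤ)) =
      ∑ᶠ (ch : List (List ℕ))
        (_ : ch.length = τ.length + 1 ∧ ch.getD 0 [] = α ∧
          (∀ γ ∈ ch, IsComposition γ) ∧
          ∀ i < τ.length, SubCompS (τ.getD i 0) (ch.getD i []) (ch.getD (i + 1) [])),
        immaculate (ch.getLastD []) :=
  iterated_pieri' α hα τ hτ
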